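/- (ℓ₀ version of Theorem 2.) Let k ≥ 1, let a₁, …, a_k and C be nonzero integers, let ε = 1/(4 Σᵢ |aᵢ|) and P ≥ 2k/ε², and define g : ℝ^{2k} → ℝ by g(x) = (C - Σ_{i=1}^k aᵢ xᵢ)² + P · Σ_{i=1}^k (1 - xᵢ - x_{i+k})² + ‖x‖₀, where ‖x‖₀ = #{i : xᵢ ≠ 0} is the counting 'norm'. Then there exists a subset S ⊆ {1, …, k} with Σ_{i∈S} aᵢ = C if and only if there exists x ∈ ℝ^{2k} with g(x) ≤ k; moreover, if no such subset exists, then g(x) ≥ k + 1/4 for all x ∈ ℝ^{2k}. -/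

import Mathlib

open BigOperators Finset

/-- The inclusion `{1, …, k} → {1, …, 2k}`, `i ↦ i`. -/
def lo (k : ℕ) (i : Fin k) : Fin (2 * k) :=
  ⟨i.1, by have := i.2; omega⟩

/-- The shifted inclusion `{1, …, k} → {1, …, 2k}`, `i ↦ i + k`. -/
def hi (k : ℕ) (i : Fin k) : Fin (2 * k) :=
  ⟨i.1 + k, by have := i.2; omega⟩

/-- The `ℓ₀`-regularized objective:
`g(x) = (C - Σᵢ aᵢ xᵢ)² + P·Σᵢ (1 - xᵢ - x_{i+k})² + ‖x‖₀`, where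
`‖x‖₀ = #{i : xᵢ ≠ 0}` is the counting "norm". -/
noncomputable def gzero (k : ℕ) (a : Fin k → ℤ) (C : ℤ) (P : ℝ)
    (x : Fin (2 * k) → ℝ) : ℝ :=
  ((C : ℝ) - ∑ i : Fin k, (a i : ℝ) * x (lo k i)) ^ 2
    + P * ∑ i : Fin k, (1 - x (lo k i) - x (hi k i)) ^ 2
    + ∑ i : Fin (2 * k), (if x i = 0 then (0 : ℝ) else 1)

/-!
Group the coordinates into the pairs `(xᵢ, x_{i+k})` and write `g` as the squared residual plus
one cost `P (1 - u - v)² + |u|₀ + |v|₀` per pair. As soon as `P ≥ 1` every pair costs at least `1`,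
and a pair costing less than `5/4` must have exactly one nonzero entry, with `|1 - u| < ε` when
`u ≠ 0`. If some pair costs `5/4` we are done; otherwise `xᵢ` is `ε`-close to the indicator of
`S = {i : xᵢ ≠ 0}`, so `Σ aᵢ xᵢ` is within `ε Σ |aᵢ| = 1/4` of the integer `Σ_{i ∈ S} aᵢ ≠ C`
and the residual is at least `(3/4)² ≥ 1/4`. Conversely the indicator of a good `S` together with
its complement costs exactly `k`.
-/

def pairEquiv (k : ℕ) : Fin k ⊕ Fin k ≃ Fin (2 * k) :=
  finSumFinEquiv.trans (finCongr (two_mul k).symm)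

@[simp]
lemma pairEquiv_inl (k : ℕ) (i : Fin k) : pairEquiv k (Sum.inl i) = lo k i := by
  ext; simp [pairEquiv, lo]

@[simp]
lemma pairEquiv_inr (k : ℕ) (i : Fin k) : pairEquiv k (Sum.inr i) = hi k i := by
  ext; simp [pairEquiv, hi, Nat.add_comm]

lemma sum_fin_two_mul {M : Type*} [AddCommMonoid M] (k : ℕ) (f : Fin (2 * k) → M) :
    ∑ j, f j = ∑ i, f (lo k i) + ∑ i, f (hi k i) := by
  rw [← (pairEquiv k).sum_comp, Fintype.sum_sum_type]
  simp

noncomputable def pairCost (P u v : ℝ) : ℝ :=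
  P * (1 - u - v) ^ 2 + (if u = 0 then 0 else 1) + (if v = 0 then 0 else 1)

lemma gzero_eq_add_sum_pairCost (k : ℕ) (a : Fin k → ℤ) (C : ℤ) (P : ℝ) (x : Fin (2 * k) → ℝ) :
    gzero k a C P x = ((C : ℝ) - ∑ i, (a i : ℝ) * x (lo k i)) ^ 2
      + ∑ i, pairCost P (x (lo k i)) (x (hi k i)) := by
  simp only [gzero, pairCost, sum_fin_two_mul k, mul_sum, sum_add_distrib]
  ring

lemma one_le_pairCost {P : ℝ} (hP : 1 ≤ P) (u v : ℝ) : 1 ≤ pairCost P u v := by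
  unfold pairCost
  split_ifs with hu hv <;> nlinarith [sq_nonneg (1 - u - v)]

lemma eq_zero_or_abs_one_sub_lt_of_pairCost_lt {P ε u v : ℝ} (hP : 5 / 4 ≤ P)
    (hPε : 1 / 4 ≤ P * ε ^ 2) (hε : 0 ≤ ε) (h : pairCost P u v < 5 / 4) :
    u = 0 ∨ |1 - u| < ε := by
  unfold pairCost at h
  by_cases hu : u = 0
  · exact Or.inl hu
  by_cases hv : v = 0
  · subst hv
    simp only [hu, if_false, if_true, sub_zero] at h
    have hsq : (1 - u) ^ 2 < ε ^ 2 := by nlinarith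
    exact Or.inr (abs_lt_of_sq_lt_sq hsq hε)
  · simp only [hu, hv, if_false] at h
    nlinarith [sq_nonneg (1 - u - v)]

lemma one_le_sum_abs {ι : Type*} [Fintype ι] (a : ι → ℤ) {j : ι} (hj : a j ≠ 0) :
    1 ≤ ∑ i, |(a i : ℝ)| :=
  calc (1 : ℝ) ≤ |(a j : ℝ)| := by exact_mod_cast Int.one_le_abs hj
    _ ≤ ∑ i, |(a i : ℝ)| := single_le_sum (fun i _ => abs_nonneg (a i : ℝ)) (mem_univ j)

lemma one_fourth_le_sq_sub_sum {ι : Type*} [Fintype ι] (a : ι → ℤ) (C : ℤ) {ε : ℝ} (u : ι → ℝ)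
    (hε : 0 ≤ ε) (hεa : ε * ∑ i, |(a i : ℝ)| ≤ 1 / 2) (hu : ∀ i, u i = 0 ∨ |1 - u i| ≤ ε)
    (hno : ∀ S : Finset ι, ∑ i ∈ S, a i ≠ C) :
    1 / 4 ≤ ((C : ℝ) - ∑ i, (a i : ℝ) * u i) ^ 2 := by
  classical
  set S := univ.filter fun i => u i ≠ 0
  have hgap : 1 ≤ |(C : ℝ) - ∑ i ∈ S, (a i : ℝ)| := by
    exact_mod_cast Int.one_le_abs (sub_ne_zero.2 (hno S).symm)
  have hclose : |∑ i ∈ S, (a i : ℝ) - ∑ i, (a i : ℝ) * u i| ≤ 1 / 2 := by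
    have hterm : ∀ i, |(if u i ≠ 0 then (a i : ℝ) else 0) - a i * u i| ≤ |(a i : ℝ)| * ε := by
      intro i
      by_cases h0 : u i = 0
      · simp only [h0, ne_eq, not_true_eq_false, if_false, mul_zero, sub_self, abs_zero]
        positivity
      · rw [if_pos h0, ← mul_one_sub, abs_mul]
        exact mul_le_mul_of_nonneg_left ((hu i).resolve_left h0) (abs_nonneg _)
    calc |∑ i ∈ S, (a i : ℝ) - ∑ i, (a i : ℝ) * u i|
        = |∑ i, ((if u i ≠ 0 then (a i : ℝ) else 0) - a i * u i)| := by
          rw [sum_filter, sum_sub_distrib]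
      _ ≤ ∑ i, |(a i : ℝ)| * ε := (abs_sum_le_sum_abs _ _).trans (sum_le_sum fun i _ => hterm i)
      _ ≤ 1 / 2 := by rw [← sum_mul, mul_comm]; exact hεa
  have hres : 1 / 2 ≤ |(C : ℝ) - ∑ i, (a i : ℝ) * u i| := by
    have := abs_sub_abs_le_abs_sub ((C : ℝ) - ∑ i ∈ S, (a i : ℝ))
      ((C : ℝ) - ∑ i, (a i : ℝ) * u i)
    rw [sub_sub_sub_cancel_left] at this
    linarith [abs_sub_comm (∑ i ∈ S, (a i : ℝ)) (∑ i, (a i : ℝ) * u i)]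
  nlinarith [sq_abs ((C : ℝ) - ∑ i, (a i : ℝ) * u i)]

lemma gzero_ge_of_no_good_subset (k : ℕ) (a : Fin k → ℤ) (C : ℤ) {ε P : ℝ} (hP : 5 / 4 ≤ P)
    (hPε : 1 / 4 ≤ P * ε ^ 2) (hε : 0 ≤ ε) (hεa : ε * ∑ i, |(a i : ℝ)| ≤ 1 / 2)
    (hno : ∀ S : Finset (Fin k), ∑ i ∈ S, a i ≠ C) (x : Fin (2 * k) → ℝ) :
    (k : ℝ) + 1 / 4 ≤ gzero k a C P x := by
  rw [gzero_eq_add_sum_pairCost]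
  set c := fun i => pairCost P (x (lo k i)) (x (hi k i))
  have hc : ∀ i, 0 ≤ c i - 1 := fun i => sub_nonneg.2 (one_le_pairCost (by linarith) _ _)
  have hsum : ∑ i, c i = k + ∑ i, (c i - 1) := by simp [sum_sub_distrib]
  have hres := sq_nonneg ((C : ℝ) - ∑ i, (a i : ℝ) * x (lo k i))
  by_cases hexp : ∃ j, 5 / 4 ≤ c j
  · obtain ⟨j, hj⟩ := hexp
    have := single_le_sum (fun i _ => hc i) (mem_univ j)
    linarith
  · push Not at hexp
    have hnear : ∀ i, x (lo k i) = 0 ∨ |1 - x (lo k i)| ≤ ε := fun i =>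
      (eq_zero_or_abs_one_sub_lt_of_pairCost_lt hP hPε hε (hexp i)).imp_right le_of_lt
    have := one_fourth_le_sq_sub_sum a C _ hε hεa hnear hno
    have := sum_nonneg fun i (_ : i ∈ univ) => hc i
    linarith

def indicatorPair (k : ℕ) (S : Finset (Fin k)) (j : Fin (2 * k)) : ℝ :=
  Sum.elim (fun i => if i ∈ S then 1 else 0) (fun i => if i ∈ S then 0 else 1)
    ((pairEquiv k).symm j)

lemma indicatorPair_lo (k : ℕ) (S : Finset (Fin k)) (i : Fin k) :
    indicatorPair k S (lo k i) = if i ∈ S then 1 else 0 := by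
  simp [indicatorPair, ← pairEquiv_inl]

lemma indicatorPair_hi (k : ℕ) (S : Finset (Fin k)) (i : Fin k) :
    indicatorPair k S (hi k i) = if i ∈ S then 0 else 1 := by
  simp [indicatorPair, ← pairEquiv_inr]

lemma gzero_indicatorPair (k : ℕ) (a : Fin k → ℤ) (C : ℤ) (P : ℝ) (S : Finset (Fin k))
    (hS : ∑ i ∈ S, a i = C) : gzero k a C P (indicatorPair k S) = k := by
  have hpair : ∀ i, pairCost P (indicatorPair k S (lo k i)) (indicatorPair k S (hi k i)) = 1 := by
    intro i
    by_cases hi : i ∈ S <;> simp [pairCost, indicatorPair_lo, indicatorPair_hi, hi]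
  have hres : ∑ i, (a i : ℝ) * indicatorPair k S (lo k i) = C := by
    simp [indicatorPair_lo, ← hS]
  simp [gzero_eq_add_sum_pairCost, hpair, hres]

theorem ell_zero_theorem_two_general
    (k : ℕ) (hk : 1 ≤ k) (a : Fin k → ℤ) (C : ℤ)
    (ha : ∀ i, a i ≠ 0) (ε P : ℝ)
    (hε : ε = 1 / (4 * ∑ i, |(a i : ℝ)|)) (hP : 2 * k / ε ^ 2 ≤ P) :
    ((∃ S : Finset (Fin k), ∑ i ∈ S, a i = C)
        ↔ ∃ x : Fin (2 * k) → ℝ, gzero k a C P x ≤ k)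
      ∧ ((¬ ∃ S : Finset (Fin k), ∑ i ∈ S, a i = C)
        → ∀ x : Fin (2 * k) → ℝ, (k : ℝ) + 1 / 4 ≤ gzero k a C P x) := by
  have hA := one_le_sum_abs a (ha ⟨0, hk⟩)
  have hε0 : 0 < ε := by rw [hε]; positivity
  have hεa : ε * ∑ i, |(a i : ℝ)| = 1 / 4 := by rw [hε]; field_simp
  have hPε : 2 * k ≤ P * ε ^ 2 := (div_le_iff₀ (by positivity)).1 hP
  have hk1 : (1 : ℝ) ≤ k := by exact_mod_cast hk
  have hε4 : ε ≤ 1 / 4 := by nlinarith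
  have hP_ge : 5 / 4 ≤ P := by
    have hP0 : 0 ≤ P := (pos_of_mul_pos_left (by linarith) (by positivity : 0 ≤ ε ^ 2)).le
    nlinarith [mul_le_mul_of_nonneg_left (pow_le_pow_left₀ hε0.le hε4 2) hP0]
  have hlow : (¬ ∃ S : Finset (Fin k), ∑ i ∈ S, a i = C) →
      ∀ x, (k : ℝ) + 1 / 4 ≤ gzero k a C P x := fun hno =>
    gzero_ge_of_no_good_subset k a C hP_ge (by linarith) hε0.le (by linarith)
      (fun S hS => hno ⟨S, hS⟩)
  refine ⟨⟨fun ⟨S, hS⟩ => ⟨_, (gzero_indicatorPair k a C P S hS).le⟩, fun ⟨x, hx⟩ => ?_⟩, hlow⟩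
  by_contra hno
  linarith [hlow hno x]

/-- `ℓ₀` version of Theorem 2: with `ε = 1/(4 Σᵢ |aᵢ|)` and `P ≥ 2k/ε²`, a good
subset exists iff some `x` has `g(x) ≤ k`; and if no good subset exists then
`g(x) ≥ k + 1/4` for all `x`. -/
theorem ell_zero_theorem_two
    (k : ℕ) (hk : 1 ≤ k) (a : Fin k → ℤ) (C : ℤ)
    (ha : ∀ i, a i ≠ 0) (hC : C ≠ 0) (ε P : ℝ)
    (hε : ε = 1 / (4 * ∑ i, |(a i : ℝ)|)) (hP : 2 * k / ε ^ 2 ≤ P) :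
    ((∃ S : Finset (Fin k), ∑ i ∈ S, a i = C)
        ↔ ∃ x : Fin (2 * k) → ℝ, gzero k a C P x ≤ k)
      ∧ ((¬ ∃ S : Finset (Fin k), ∑ i ∈ S, a i = C)
        → ∀ x : Fin (2 * k) → ℝ, (k : ℝ) + 1 / 4 ≤ gzero k a C P x) :=
  ell_zero_theorem_two_general k hk a C ha ε P hε hP
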